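/- arXiv:1102.4046 — 5 statements merged into one kernel-verified Lean document; each statement's English description precedes it below -/
import Mathlib

section
/- Let A be a commutative monoid with zero. The set spec_c A of prime congruences on A, topologized by the subbasis of sets D(a,b) = {E : (a,b) ∉ E} for a, b ∈ A, is a compact topological space. -/
/-- A congruence `E` on a commutative monoid with zero is prime if `1 ≁ 0` and
`a·f ∼ b·f` implies `a ∼ b` or `f ∼ 0`. -/
def IsPrimeCon {A : Type*} [CommMonoidWithZero A] (E : Con A) : Prop :=
  ¬ E 1 0 ∧ ∀ a b f : A, E (a * f) (b * f) → E a b ∨ E f 0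

/-- The congruence spectrum: the set of prime congruences on `A`. -/
def SpecC (A : Type*) [CommMonoidWithZero A] : Type _ := {E : Con A // IsPrimeCon E}

/-- The topology on `spec_c A` generated by the subbasic open sets
`D(a,b) = {E : (a,b) ∉ E}`. -/
instance SpecC.instTopologicalSpace (A : Type*) [CommMonoidWithZero A] :
    TopologicalSpace (SpecC A) :=
  TopologicalSpace.generateFrom
    {U | ∃ a b : A, U = {E : SpecC A | ¬ E.1 a b}}

/-!
A prime congruence is determined by its indicator function `A × A → Bool`, and each axiom of a
prime congruence constrains only finitely many values of that function. Hence these indicators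
form a closed, so by Tychonoff compact, subset of `A × A → Bool`. Decoding an indicator into a
congruence is surjective, and continuous because the preimage of `D(a,b)` is the clopen condition
`f (a, b) = false`; so `spec_c A` is a continuous image of a compact space.
-/

lemma isClopen_setOf_apply_eq_true {ι : Type*} (i : ι) :
    IsClopen {f : ι → Bool | f i} :=
  (isClopen_discrete {true}).preimage (continuous_apply i)

namespace SpecC

variable {A : Type*} [CommMonoidWithZero A]

def IsPrimeConIndicator (f : A × A → Bool) : Prop :=
  (∀ a, f (a, a)) ∧ (∀ a b, f (a, b) → f (b, a)) ∧ (∀ a b c, f (a, b) → f (b, c) → f (a, c)) ∧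
    (∀ a b c d, f (a, b) → f (c, d) → f (a * c, b * d)) ∧ ¬ f (1, 0) ∧
    ∀ a b g, f (a * g, b * g) → f (a, b) ∨ f (g, 0)

lemma isClosed_setOf_isPrimeConIndicator :
    IsClosed {f : A × A → Bool | IsPrimeConIndicator f} := by
  simp only [IsPrimeConIndicator, Set.ofPred_and, Set.ofPred_forall]
  repeat' first | intro _ | apply IsClosed.inter | apply isClosed_iInter | apply isClosed_imp |
    apply IsClosed.union | apply isClosed_const
  all_goals first
    | exact (isClopen_setOf_apply_eq_true _).isClosed
    | exact (isClopen_setOf_apply_eq_true _).isOpen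

def ofIndicator {f : A × A → Bool} (hf : IsPrimeConIndicator f) : SpecC A :=
  ⟨{ r a b := f (a, b)
     iseqv := ⟨hf.1, hf.2.1 _ _, hf.2.2.1 _ _ _⟩
     mul' := hf.2.2.2.1 _ _ _ _ },
   hf.2.2.2.2⟩

open Classical in
noncomputable def indicator (E : SpecC A) : A × A → Bool := fun p => E.1 p.1 p.2

open Classical in
lemma indicator_apply (E : SpecC A) (a b : A) : E.indicator (a, b) ↔ E.1 a b :=
  decide_eq_true_iff

lemma isPrimeConIndicator_indicator (E : SpecC A) : IsPrimeConIndicator E.indicator := by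
  obtain ⟨h10, hprime⟩ := E.2
  simp only [IsPrimeConIndicator, indicator_apply]
  exact ⟨E.1.refl, fun _ _ => E.1.symm, fun _ _ _ => E.1.trans, fun _ _ _ _ => E.1.mul, h10,
    hprime⟩

lemma ofIndicator_indicator (E : SpecC A) : ofIndicator E.isPrimeConIndicator_indicator = E :=
  Subtype.ext <| Con.ext fun a b => indicator_apply E a b

lemma surjective_ofIndicator :
    Function.Surjective fun f : {f : A × A → Bool // IsPrimeConIndicator f} => ofIndicator f.2 :=
  fun E => ⟨⟨E.indicator, E.isPrimeConIndicator_indicator⟩, ofIndicator_indicator E⟩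

lemma continuous_ofIndicator :
    Continuous fun f : {f : A × A → Bool // IsPrimeConIndicator f} => ofIndicator f.2 := by
  refine continuous_generateFrom_iff.2 ?_
  rintro _ ⟨a, b, rfl⟩
  exact (isClopen_setOf_apply_eq_true (a, b)).isClosed.isOpen_compl.preimage continuous_subtype_val

end SpecC

/-- The space `spec_c A` of prime congruences is compact. -/
theorem SpecC.compactSpace (A : Type*) [CommMonoidWithZero A] :
    CompactSpace (SpecC A) := by
  have : CompactSpace {f : A × A → Bool // SpecC.IsPrimeConIndicator f} :=
    isCompact_iff_compactSpace.1 SpecC.isClosed_setOf_isPrimeConIndicator.isCompact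
  exact SpecC.surjective_ofIndicator.compactSpace SpecC.continuous_ofIndicator
end

section
/- Let A be an integral commutative monoid with zero, meaning 1 ≠ 0 and af = bf implies a = b or f = 0. Then the diagonal relation Δ is a prime congruence on A, Δ lies in every nonempty open subset of spec_c A, and consequently the space spec_c A of prime congruences is irreducible. -/
theorem specializes_generateFrom_iff {α : Type*} {g : Set (Set α)} {x y : α} :
    @Specializes α (TopologicalSpace.generateFrom g) x y ↔ ∀ s ∈ g, y ∈ s → x ∈ s := by
  let := TopologicalSpace.generateFrom g
  rw [specializes_iff_nhds, ← Filter.tendsto_id', TopologicalSpace.tendsto_nhds_generateFrom_iff]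
  exact forall₂_congr fun s hs =>
    imp_congr_right fun _ => (TopologicalSpace.isOpen_generateFrom_of_mem hs).mem_nhds_iff

theorem isPrimeCon_bot_iff {A : Type*} [CommMonoidWithZero A] :
    IsPrimeCon (⊥ : Con A) ↔ (1 : A) ≠ 0 ∧ ∀ a b f : A, a * f = b * f → a = b ∨ f = 0 :=
  Iff.rfl

namespace SpecC

variable {A : Type*} [CommMonoidWithZero A]

def diagonal (hΔ : IsPrimeCon (⊥ : Con A)) : SpecC A := ⟨⊥, hΔ⟩

theorem diagonal_specializes (hΔ : IsPrimeCon (⊥ : Con A)) (E : SpecC A) :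
    diagonal hΔ ⤳ E := by
  refine specializes_generateFrom_iff.2 ?_
  rintro _ ⟨a, b, rfl⟩ hE (rfl : a = b)
  exact hE (E.1.refl a)

theorem isGenericPoint_diagonal (hΔ : IsPrimeCon (⊥ : Con A)) :
    IsGenericPoint (diagonal hΔ) Set.univ :=
  isGenericPoint_iff_specializes.2 fun E => iff_of_true (diagonal_specializes hΔ E) trivial

end SpecC

/-- If `A` is an integral commutative monoid with zero (`1 ≠ 0`, and `af = bf` implies
`a = b` or `f = 0`), then the diagonal `Δ = ⊥` is a prime congruence which lies in every
nonempty open subset of `spec_c A`; consequently `spec_c A` is irreducible. -/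
theorem SpecC.irreducible_of_integral (A : Type*) [CommMonoidWithZero A]
    (h1 : (1 : A) ≠ 0)
    (hint : ∀ a b f : A, a * f = b * f → a = b ∨ f = 0) :
    ∃ hΔ : IsPrimeCon (⊥ : Con A),
      (∀ U : Set (SpecC A), IsOpen U → U.Nonempty →
        (⟨⊥, hΔ⟩ : SpecC A) ∈ U) ∧
      IrreducibleSpace (SpecC A) := by
  have hΔ : IsPrimeCon (⊥ : Con A) := isPrimeCon_bot_iff.2 ⟨h1, hint⟩
  have hgen := SpecC.isGenericPoint_diagonal hΔ
  refine ⟨hΔ, fun U hU hU' => (hgen.mem_open_set_iff hU).2 (by rwa [Set.univ_inter]), ?_⟩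
  exact (irreducibleSpace_def _).2 hgen.isIrreducible
end

section
/- Every congruence on a finitely generated commutative monoid is finitely generated: if A is a commutative monoid generated by finitely many elements and C is a congruence on A, then there exist finitely many pairs (a_1,b_1),…,(a_n,b_n) ∈ A × A such that C is the smallest congruence containing all (a_i,b_i). -/
/-!
Sending a congruence `c` to the ideal of `ℤ[A]` spanned by the binomials `a - b` with `c a b`
is an order embedding: that ideal lies in the kernel of `ℤ[A] → ℤ[A ⧸ c]`, so it contains
`a - b` only if `c a b`. As `ℤ[A]` is noetherian by Hilbert's basis theorem, congruences on `A`
satisfy the ascending chain condition, and a maximal finitely generated congruence below `C`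
must be `C` itself.
-/

open MonoidAlgebra

lemma MonoidAlgebra.mapDomainRingHom_of {R M N : Type*} [Semiring R] [Monoid M] [Monoid N]
    (f : M →* N) (a : M) : mapDomainRingHom R f (of R M a) = of R N (f a) := by
  simp

namespace Con

section Binomial

variable (R : Type*) {A : Type*} [CommRing R] [CommMonoid A]

noncomputable def binomialIdeal (c : Con A) : Ideal R[A] :=
  Ideal.span {x | ∃ a b, c a b ∧ x = of R A a - of R A b}

variable {R}

lemma binomialIdeal_le_ker_mapDomainRingHom (c : Con A) :
    c.binomialIdeal R ≤ RingHom.ker (mapDomainRingHom R c.mk') := by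
  rw [binomialIdeal, Ideal.span_le]
  rintro _ ⟨a, b, hab, rfl⟩
  rw [SetLike.mem_coe, RingHom.mem_ker, map_sub, sub_eq_zero, mapDomainRingHom_of,
    mapDomainRingHom_of]
  exact congrArg _ (c.eq.2 hab)

variable [Nontrivial R]

lemma of_sub_of_mem_binomialIdeal_iff (c : Con A) (a b : A) :
    of R A a - of R A b ∈ c.binomialIdeal R ↔ c a b := by
  refine ⟨fun h => ?_, fun hab => Ideal.subset_span ⟨a, b, hab, rfl⟩⟩
  have h := c.binomialIdeal_le_ker_mapDomainRingHom h
  rw [RingHom.mem_ker, map_sub, sub_eq_zero, mapDomainRingHom_of, mapDomainRingHom_of] at h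
  exact c.eq.1 (of_injective h)

lemma binomialIdeal_le_binomialIdeal_iff {c d : Con A} :
    c.binomialIdeal R ≤ d.binomialIdeal R ↔ c ≤ d := by
  refine ⟨fun h a b hab => ?_, fun h => Ideal.span_mono ?_⟩
  · rw [← of_sub_of_mem_binomialIdeal_iff (R := R)] at hab ⊢
    exact h hab
  · rintro _ ⟨a, b, hab, rfl⟩
    exact ⟨a, b, h hab, rfl⟩

lemma binomialIdeal_strictMono : StrictMono (binomialIdeal R : Con A → Ideal R[A]) :=
  strictMono_of_le_iff_le fun _ _ => binomialIdeal_le_binomialIdeal_iff.symm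

variable (R) in
lemma wellFoundedGT_of_isNoetherianRing [IsNoetherianRing R[A]] : WellFoundedGT (Con A) :=
  (binomialIdeal_strictMono (R := R)).wellFoundedGT

instance [Monoid.FG A] : WellFoundedGT (Con A) :=
  have : IsNoetherianRing ℤ[A] := Algebra.FiniteType.isNoetherianRing ℤ _
  wellFoundedGT_of_isNoetherianRing ℤ

end Binomial

lemma exists_finset_eq_conGen {M : Type*} [Mul M] [WellFoundedGT (Con M)] (c : Con M) :
    ∃ s : Finset (M × M), c = conGen (fun x y => (x, y) ∈ s) := by
  classical
  obtain ⟨_, ⟨s, rfl, hsc⟩, hmax⟩ := wellFounded_gt.has_min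
    {d | ∃ s : Finset (M × M), d = conGen (fun x y => (x, y) ∈ s) ∧ d ≤ c}
    ⟨_, ∅, rfl, conGen_le.2 fun _ _ h => absurd h (Finset.notMem_empty _)⟩
  refine ⟨s, le_antisymm (fun a b hab => ?_) hsc⟩
  have hle : conGen (fun x y => (x, y) ∈ s) ≤ conGen (fun x y => (x, y) ∈ insert (a, b) s) :=
    conGen_mono fun x y h => Finset.mem_insert_of_mem h
  have hins : conGen (fun x y => (x, y) ∈ insert (a, b) s) ≤ c := by
    refine conGen_le.2 fun x y h => ?_
    rcases Finset.mem_insert.1 h with h | h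
    · obtain ⟨rfl, rfl⟩ := Prod.mk.inj h
      exact hab
    · exact hsc (ConGen.Rel.of _ _ h)
  rw [eq_of_le_of_not_lt hle (hmax _ ⟨_, rfl, hins⟩)]
  exact ConGen.Rel.of _ _ (Finset.mem_insert_self _ _)

end Con

/-- Rédei's theorem: every congruence on a finitely generated commutative monoid is
finitely generated. -/
theorem con_fg_of_monoid_fg {A : Type*} [CommMonoid A] (h : Monoid.FG A)
    (C : Con A) :
    ∃ s : Finset (A × A), C = conGen (fun x y => (x, y) ∈ s) :=
  have := h
  C.exists_finset_eq_conGen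
end

section
/- Let C = {0, 1, τ, τ², τ³, …} be the free commutative monoid on one generator τ with an absorbing zero adjoined. The prime congruences on C are exactly: the diagonal Δ; the congruence with classes {0, τ, τ², …} and {1} (i.e. τ ∼ 0); and for each n ≥ 1 the congruence given by τ^a ∼ τ^b iff n divides a − b (i.e. τⁿ ∼ 1), and all of these are distinct. -/
/-- The free commutative monoid on one generator `τ` with an absorbing zero adjoined:
`C = {0, 1, τ, τ², …}`. -/
abbrev FreeMonoidZero : Type := WithZero (Multiplicative ℕ)

/-- The generator `τ`. -/
def tau : FreeMonoidZero := ((Multiplicative.ofAdd 1 : Multiplicative ℕ) : FreeMonoidZero)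

/-- `E` is the diagonal congruence `Δ`. -/
def IsDiagCon (E : Con FreeMonoidZero) : Prop := ∀ x y, E x y ↔ x = y

/-- `E` is the congruence `τ ∼ 0`, with the two classes `{0, τ, τ², …}` and `{1}`. -/
def IsTauZeroCon (E : Con FreeMonoidZero) : Prop :=
  ∀ x y, E x y ↔ ((x = 1 ∧ y = 1) ∨ (x ≠ 1 ∧ y ≠ 1))

/-- `E` is the congruence `τⁿ ∼ 1`, given by `τ^a ∼ τ^b ↔ n ∣ a - b`. -/
def IsTauNCon (n : ℕ) (E : Con FreeMonoidZero) : Prop :=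
  ∀ x y, E x y ↔ ((x = 0 ∧ y = 0) ∨
    ∃ a b : ℕ, x = tau ^ a ∧ y = tau ^ b ∧ (n : ℤ) ∣ (a : ℤ) - (b : ℤ))

/-!
If `τ ∼ 0` in a prime congruence, then every `x ≠ 1` is a multiple of `τ` and hence `∼ 0`.
Otherwise primality says that no power of `τ` is `∼ 0` and that `τ^(a+c) ∼ τ^(b+c)` implies
`τ^a ∼ τ^b`; so the differences `a - b` with `τ^a ∼ τ^b` form a subgroup `nℤ` of `ℤ`, and
the congruence is `τⁿ ∼ 1`, which is `Δ` for `n = 0`. Conversely, `τⁿ ∼ 1` is the kernel of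
`τ^a ↦ a mod n` into `ℤ/n` with a zero adjoined, a cancellative monoid with zero, so it is
prime.
-/

theorem Con.isPrimeCon_ker {A B F : Type*} [CommMonoidWithZero A] [CommMonoidWithZero B]
    [IsRightCancelMulZero B] [Nontrivial B] [FunLike F A B] [MonoidWithZeroHomClass F A B]
    (f : F) : IsPrimeCon (Con.ker f) := by
  refine ⟨by simp [Con.ker_rel], fun a b c h => ?_⟩
  simp only [Con.ker_rel, map_mul, map_zero] at h ⊢
  by_cases hc : f c = 0
  · exact Or.inr hc
  · exact Or.inl (mul_right_cancel₀ hc h)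

theorem AddCon.exists_rel_iff_dvd_sub_of_cancel (r : AddCon ℕ)
    (hcancel : ∀ a b c, r (a + c) (b + c) → r a b) :
    ∃ n : ℕ, ∀ a b : ℕ, r a b ↔ (n : ℤ) ∣ (a : ℤ) - (b : ℤ) := by
  let H : AddSubgroup ℤ :=
    { carrier := {d | ∃ a b : ℕ, r a b ∧ (a : ℤ) - b = d}
      zero_mem' := ⟨0, 0, r.refl 0, sub_self _⟩
      add_mem' := by
        rintro _ _ ⟨a, b, hab, rfl⟩ ⟨c, d, hcd, rfl⟩
        exact ⟨a + c, b + d, r.add hab hcd, by push_cast; ring⟩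
      neg_mem' := by
        rintro _ ⟨a, b, hab, rfl⟩
        exact ⟨b, a, r.symm hab, by ring⟩ }
  have mem_H : ∀ a b : ℕ, r a b ↔ (a : ℤ) - b ∈ H := by
    refine fun a b => ⟨fun h => ⟨a, b, h, rfl⟩, ?_⟩
    rintro ⟨a', b', h', he⟩
    have hshift : r (a' + b) (b' + b) := r.add h' (r.refl b)
    rw [show a' + b = a + b' by omega, add_comm b' b] at hshift
    exact hcancel a b b' hshift
  obtain ⟨m, hm⟩ := Int.subgroup_cyclic H
  refine ⟨m.natAbs, fun a b => ?_⟩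
  rw [mem_H, hm, ← AddSubgroup.zmultiples_eq_closure, Int.mem_zmultiples_iff, Int.natAbs_dvd]

theorem tau_pow_eq_coe (a : ℕ) :
    tau ^ a = ((Multiplicative.ofAdd a : Multiplicative ℕ) : FreeMonoidZero) := by
  rw [tau, ← WithZero.coe_pow, ← ofAdd_nsmul, smul_eq_mul, mul_one]

theorem tau_ne_zero : tau ≠ 0 :=
  WithZero.coe_ne_zero

theorem tau_pow_ne_zero (a : ℕ) : tau ^ a ≠ 0 :=
  pow_ne_zero a tau_ne_zero

theorem tau_pow_inj {a b : ℕ} : tau ^ a = tau ^ b ↔ a = b := by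
  simp [tau_pow_eq_coe]

theorem eq_zero_or_exists_eq_tau_pow (x : FreeMonoidZero) : x = 0 ∨ ∃ a, x = tau ^ a := by
  induction x using WithZero.recZeroCoe with
  | zero => exact Or.inl rfl
  | coe m => exact Or.inr ⟨m.toAdd, by rw [tau_pow_eq_coe, ofAdd_toAdd]⟩

theorem tau_ne_one : tau ≠ 1 := by
  simpa using tau_pow_inj.not.mpr one_ne_zero

theorem tau_dvd_of_ne_one {x : FreeMonoidZero} (hx : x ≠ 1) : tau ∣ x := by
  rcases eq_zero_or_exists_eq_tau_pow x with rfl | ⟨a, rfl⟩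
  · exact dvd_zero tau
  · exact dvd_pow_self tau (by rintro rfl; exact hx (pow_zero tau))

theorem isTauNCon_iff {n : ℕ} {E : Con FreeMonoidZero} :
    IsTauNCon n E ↔ (∀ a, ¬ E (tau ^ a) 0) ∧
      ∀ a b : ℕ, E (tau ^ a) (tau ^ b) ↔ (n : ℤ) ∣ (a : ℤ) - (b : ℤ) := by
  unfold IsTauNCon
  constructor
  · intro h
    refine ⟨fun a => ?_, fun a b => ?_⟩ <;> simp [h, tau_ne_zero, tau_pow_inj, eq_comm]
  · rintro ⟨hzero, hpow⟩ x y
    rcases eq_zero_or_exists_eq_tau_pow x with rfl | ⟨a, rfl⟩ <;>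
    rcases eq_zero_or_exists_eq_tau_pow y with rfl | ⟨b, rfl⟩
    · simpa using E.refl 0
    · simpa [(tau_pow_ne_zero _).symm, tau_ne_zero] using fun h => hzero b (E.symm h)
    · simpa [(tau_pow_ne_zero _).symm, tau_ne_zero] using hzero a
    · simp [hpow, tau_ne_zero, tau_pow_inj]

theorem isTauNCon_zero_iff {E : Con FreeMonoidZero} : IsTauNCon 0 E ↔ IsDiagCon E := by
  refine forall_congr' fun x => forall_congr' fun y => iff_congr Iff.rfl ?_
  rcases eq_zero_or_exists_eq_tau_pow x with rfl | ⟨a, rfl⟩ <;>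
  rcases eq_zero_or_exists_eq_tau_pow y with rfl | ⟨b, rfl⟩ <;>
  simp [tau_ne_zero, (tau_pow_ne_zero _).symm, tau_pow_inj, sub_eq_zero]

def tauPowMod (n : ℕ) : FreeMonoidZero →*₀ WithZero (Multiplicative (ZMod n)) :=
  WithZero.map' (AddMonoidHom.toMultiplicative (Nat.castAddMonoidHom (ZMod n)))

theorem tauPowMod_tau_pow (n a : ℕ) :
    tauPowMod n (tau ^ a) = ((Multiplicative.ofAdd (a : ZMod n) : Multiplicative (ZMod n)) :
      WithZero (Multiplicative (ZMod n))) := by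
  rw [tau_pow_eq_coe, tauPowMod, WithZero.map'_coe]
  rfl

theorem isTauNCon_ker_tauPowMod (n : ℕ) : IsTauNCon n (Con.ker (tauPowMod n)) := by
  refine isTauNCon_iff.mpr ⟨fun a => by simp [Con.ker_rel, tauPowMod_tau_pow], fun a b => ?_⟩
  simpa [Con.ker_rel, tauPowMod_tau_pow, eq_comm] using ZMod.intCast_eq_intCast_iff_dvd_sub b a n

theorem IsTauNCon.isPrimeCon {n : ℕ} {E : Con FreeMonoidZero} (h : IsTauNCon n E) :
    IsPrimeCon E := by
  have hker : E = Con.ker (tauPowMod n) :=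
    Con.ext fun x y => (h x y).trans (isTauNCon_ker_tauPowMod n x y).symm
  exact hker ▸ Con.isPrimeCon_ker _

theorem IsTauNCon.unique {n m : ℕ} {E : Con FreeMonoidZero} (hn : IsTauNCon n E)
    (hm : IsTauNCon m E) : n = m := by
  refine Nat.dvd_right_iff_eq.mp fun k => ?_
  have := ((isTauNCon_iff.mp hn).2 k 0).symm.trans ((isTauNCon_iff.mp hm).2 k 0)
  simpa [Int.natCast_dvd_natCast] using this

theorem isTauZeroCon_of_rel_tau_zero {E : Con FreeMonoidZero} (h10 : ¬ E 1 0) (hτ : E tau 0) :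
    IsTauZeroCon E := by
  have rel_zero : ∀ x, x ≠ 1 → E x 0 := by
    intro x hx
    obtain ⟨y, rfl⟩ := tau_dvd_of_ne_one hx
    simpa using E.mul hτ (E.refl y)
  intro x y
  by_cases hx : x = 1 <;> by_cases hy : y = 1 <;> simp only [hx, hy, and_true,
    not_true, and_false, or_false, false_or, ne_eq, not_false_eq_true, iff_true, iff_false]
  · exact E.refl 1
  · exact fun h => h10 (E.trans h (rel_zero y hy))
  · exact fun h => h10 (E.trans (E.symm h) (rel_zero x hx))
  · exact E.trans (rel_zero x hx) (E.symm (rel_zero y hy))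

theorem IsTauZeroCon.isPrimeCon {E : Con FreeMonoidZero} (h : IsTauZeroCon E) :
    IsPrimeCon E := by
  refine ⟨by simp [h 1 0], fun a b f hab => ?_⟩
  by_cases hf : f = 1
  · subst hf
    simpa using Or.inl hab
  · exact Or.inr ((h f 0).mpr (Or.inr ⟨hf, zero_ne_one⟩))

theorem IsTauZeroCon.not_isTauNCon {E : Con FreeMonoidZero} (h : IsTauZeroCon E) (n : ℕ) :
    ¬ IsTauNCon n E := fun hn =>
  (isTauNCon_iff.mp hn).1 1 (by simpa using (h tau 0).mpr (Or.inr ⟨tau_ne_one, zero_ne_one⟩))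

theorem IsPrimeCon.not_rel_tau_pow_zero {E : Con FreeMonoidZero} (hE : IsPrimeCon E)
    (hτ : ¬ E tau 0) (a : ℕ) : ¬ E (tau ^ a) 0 := by
  induction a with
  | zero => simpa using hE.1
  | succ a ih =>
    intro h
    rw [pow_succ, ← zero_mul tau] at h
    exact (hE.2 _ _ _ h).elim ih hτ

def tauPowAddCon (E : Con FreeMonoidZero) : AddCon ℕ where
  r a b := E (tau ^ a) (tau ^ b)
  iseqv := ⟨fun _ => E.refl _, E.symm, E.trans⟩
  add' h h' := by simpa only [pow_add] using E.mul h h'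

theorem IsPrimeCon.isTauZeroCon_or_exists_isTauNCon {E : Con FreeMonoidZero}
    (hE : IsPrimeCon E) : IsTauZeroCon E ∨ ∃ n, IsTauNCon n E := by
  by_cases hτ : E tau 0
  · exact Or.inl (isTauZeroCon_of_rel_tau_zero hE.1 hτ)
  have hpow := hE.not_rel_tau_pow_zero hτ
  obtain ⟨n, hn⟩ := (tauPowAddCon E).exists_rel_iff_dvd_sub_of_cancel fun a b c h =>
    (hE.2 (tau ^ a) (tau ^ b) (tau ^ c) (by rw [← pow_add, ← pow_add]; exact h)).resolve_right
      (hpow c)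
  exact Or.inr ⟨n, isTauNCon_iff.mpr ⟨hpow, hn⟩⟩

/-- The prime congruences on `C = {0, 1, τ, τ², …}` are exactly the diagonal `Δ`, the
congruence `τ ∼ 0`, and the congruences `τⁿ ∼ 1` for `n ≥ 1`; and these are pairwise
distinct. -/
theorem primeCon_freeMonoidZero_classification :
    (∀ E : Con FreeMonoidZero,
      IsPrimeCon E ↔
        (IsDiagCon E ∨ IsTauZeroCon E ∨ ∃ n : ℕ, 1 ≤ n ∧ IsTauNCon n E)) ∧
    (∀ E : Con FreeMonoidZero, ¬ (IsDiagCon E ∧ IsTauZeroCon E)) ∧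
    (∀ (E : Con FreeMonoidZero) (n : ℕ), 1 ≤ n → ¬ (IsDiagCon E ∧ IsTauNCon n E)) ∧
    (∀ (E : Con FreeMonoidZero) (n : ℕ), 1 ≤ n → ¬ (IsTauZeroCon E ∧ IsTauNCon n E)) ∧
    (∀ (E : Con FreeMonoidZero) (n m : ℕ), 1 ≤ n → 1 ≤ m → n ≠ m →
      ¬ (IsTauNCon n E ∧ IsTauNCon m E)) := by
  refine ⟨fun E => ⟨fun hE => ?_, ?_⟩,
    fun E ⟨hD, hZ⟩ => hZ.not_isTauNCon 0 (isTauNCon_zero_iff.mpr hD),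
    fun E n hn ⟨hD, hN⟩ => by have := (isTauNCon_zero_iff.mpr hD).unique hN; omega,
    fun E n _ ⟨hZ, hN⟩ => hZ.not_isTauNCon n hN,
    fun E n m _ _ hnm ⟨hN, hM⟩ => hnm (hN.unique hM)⟩
  · rcases hE.isTauZeroCon_or_exists_isTauNCon with hZ | ⟨_ | n, hN⟩
    · exact Or.inr (Or.inl hZ)
    · exact Or.inl (isTauNCon_zero_iff.mp hN)
    · exact Or.inr (Or.inr ⟨n + 1, n.succ_pos, hN⟩)
  · rintro (hD | hZ | ⟨n, -, hN⟩)
    · exact (isTauNCon_zero_iff.mpr hD).isPrimeCon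
    · exact hZ.isPrimeCon
    · exact hN.isPrimeCon
end

section
/- Let A be a commutative monoid with zero and let p be a prime ideal of A (a subset with pA ⊆ p and 0 ∈ p whose complement is multiplicatively closed). Let G denote the quotient group of the commutative cancellative image of the monoid A∖p (i.e. the group of fractions of A/p minus zero). Then the prime congruences E on A with zero class [0]_E = p are in natural bijection with the subgroups H of G, via: x ∼_E 0 iff x ∈ p, and for x, y ∉ p, x ∼_E y iff the element x⁻¹y of G lies in H. -/
/-- The complement `A ∖ p` of a prime ideal `p`, as a submonoid of `A`. -/
def primeComplement {A : Type*} [CommMonoidWithZero A] (p : Set A)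
    (h1 : (1 : A) ∉ p) (hmul : ∀ x y : A, x ∉ p → y ∉ p → x * y ∉ p) :
    Submonoid A where
  carrier := {x | x ∉ p}
  one_mem' := h1
  mul_mem' := fun hx hy => hmul _ _ hx hy

/-- The group of fractions of (the cancellative image of) the monoid `A ∖ p`:
the localization of `A ∖ p` at all of its elements. -/
def fracGroup {A : Type*} [CommMonoidWithZero A] (p : Set A)
    (h1 : (1 : A) ∉ p) (hmul : ∀ x y : A, x ∉ p → y ∉ p → x * y ∉ p) : Type _ :=
  Localization (⊤ : Submonoid (primeComplement p h1 hmul))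

instance {A : Type*} [CommMonoidWithZero A] (p : Set A)
    (h1 : (1 : A) ∉ p) (hmul : ∀ x y : A, x ∉ p → y ∉ p → x * y ∉ p) :
    CommMonoid (fracGroup p h1 hmul) :=
  inferInstanceAs (CommMonoid (Localization _))

/-- Since every element of the group of fractions is invertible, its subgroups are the
same as its inverse-closed submonoids. -/
def IsSubgroupLike {G : Type*} [CommMonoid G] (H : Submonoid G) : Prop :=
  ∀ g ∈ H, ∀ g' : G, g * g' = 1 → g' ∈ H

/-- The element `x⁻¹·y` of the group of fractions, for `x, y ∉ p`. -/
def fracMk {A : Type*} [CommMonoidWithZero A] (p : Set A)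
    (h1 : (1 : A) ∉ p) (hmul : ∀ x y : A, x ∉ p → y ∉ p → x * y ∉ p)
    {x y : A} (hx : x ∉ p) (hy : y ∉ p) : fracGroup p h1 hmul :=
  Localization.mk (⟨y, hy⟩ : primeComplement p h1 hmul)
    ⟨⟨x, hx⟩, Submonoid.mem_top _⟩

/-!
A prime congruence `E` with zero class `p` is determined by its restriction to `A ∖ p`, and
primality makes that restriction cancellative: `x c ∼ y c` with `c ∉ p` gives `x ∼ y`. Hence
`x ∼ y` depends only on the fraction `x⁻¹y`, and the fractions of the pairs `x ∼ y` form a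
subgroup `H` of the group of fractions. Conversely, `H` defines the congruence whose classes are
`p` and the fibres of `x ↦ xH` on `A ∖ p`; it is prime because `(xf)⁻¹(yf) = x⁻¹y`.
-/

section FracMk

variable {A : Type*} [CommMonoidWithZero A] {p : Set A}
  {h1 : (1 : A) ∉ p} {hmul : ∀ x y : A, x ∉ p → y ∉ p → x * y ∉ p}

theorem fracMk_eq_fracMk_iff {x y x' y' : A} (hx : x ∉ p) (hy : y ∉ p) (hx' : x' ∉ p)
    (hy' : y' ∉ p) :
    fracMk p h1 hmul hx hy = fracMk p h1 hmul hx' hy' ↔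
      ∃ c, c ∉ p ∧ c * (x' * y) = c * (x * y') := by
  unfold fracMk
  erw [Localization.mk_eq_mk_iff, Localization.r_iff_exists]
  constructor
  · rintro ⟨c, h⟩
    exact ⟨c.1.1, c.1.2, congrArg Subtype.val h⟩
  · rintro ⟨c, hc, h⟩
    exact ⟨⟨⟨c, hc⟩, Submonoid.mem_top _⟩, Subtype.ext h⟩

theorem fracMk_eq_fracMk_of_mul_eq {x y x' y' : A} (hx : x ∉ p) (hy : y ∉ p) (hx' : x' ∉ p)
    (hy' : y' ∉ p) (h : x' * y = x * y') :
    fracMk p h1 hmul hx hy = fracMk p h1 hmul hx' hy' :=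
  (fracMk_eq_fracMk_iff hx hy hx' hy').2 ⟨1, h1, by rw [h]⟩

theorem fracMk_mul_fracMk {x y x' y' : A} (hx : x ∉ p) (hy : y ∉ p) (hx' : x' ∉ p)
    (hy' : y' ∉ p) :
    fracMk p h1 hmul hx hy * fracMk p h1 hmul hx' hy' =
      fracMk p h1 hmul (hmul _ _ hx hx') (hmul _ _ hy hy') :=
  Localization.mk_mul _ _ _ _

theorem fracMk_self {x : A} (hx : x ∉ p) : fracMk p h1 hmul hx hx = 1 :=
  Localization.mk_self
    (⟨⟨x, hx⟩, Submonoid.mem_top _⟩ : (⊤ : Submonoid (primeComplement p h1 hmul)))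

theorem exists_fracMk_eq (g : fracGroup p h1 hmul) :
    ∃ (x y : A) (hx : x ∉ p) (hy : y ∉ p), fracMk p h1 hmul hx hy = g := by
  induction g using Localization.ind with
  | _ a =>
    obtain ⟨⟨y, hy⟩, ⟨⟨x, hx⟩, -⟩⟩ := a
    exact ⟨x, y, hx, hy, rfl⟩

theorem fracMk_mul_fracMk_swap {x y : A} (hx : x ∉ p) (hy : y ∉ p) :
    fracMk p h1 hmul hx hy * fracMk p h1 hmul hy hx = 1 := by
  rw [fracMk_mul_fracMk, ← fracMk_self (hmul _ _ hx hy)]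
  exact fracMk_eq_fracMk_of_mul_eq _ _ _ _ (by rw [mul_comm y x])

theorem fracMk_mul_fracMk_cancel {x y z : A} (hx : x ∉ p) (hy : y ∉ p) (hz : z ∉ p) :
    fracMk p h1 hmul hx hy * fracMk p h1 hmul hy hz = fracMk p h1 hmul hx hz := by
  rw [fracMk_mul_fracMk]
  exact fracMk_eq_fracMk_of_mul_eq _ _ _ _ (by rw [mul_assoc])

theorem fracMk_mul_right {x y f : A} (hx : x ∉ p) (hy : y ∉ p) (hxf : x * f ∉ p)
    (hyf : y * f ∉ p) : fracMk p h1 hmul hxf hyf = fracMk p h1 hmul hx hy :=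
  fracMk_eq_fracMk_of_mul_eq _ _ _ _ (by rw [mul_assoc, mul_comm f y])

theorem submonoid_fracGroup_ext {H H' : Submonoid (fracGroup p h1 hmul)}
    (h : ∀ (x y : A) (hx : x ∉ p) (hy : y ∉ p),
      fracMk p h1 hmul hx hy ∈ H ↔ fracMk p h1 hmul hx hy ∈ H') : H = H' := by
  ext g
  obtain ⟨x, y, hx, hy, rfl⟩ := exists_fracMk_eq g
  exact h x y hx hy

end FracMk

section PrimeCon

variable {A : Type*} [CommMonoidWithZero A] {p : Set A} {E : Con A}

theorem Con.rel_iff_of_mem (hE : {x | E x 0} = p) {a b : A} (ha : a ∈ p) : E a b ↔ b ∈ p := by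
  subst hE
  exact ⟨fun hab => E.trans (E.symm hab) ha, fun hb => E.trans ha (E.symm hb)⟩

theorem Con.eq_of_zero_class_eq {E' : Con A} (hE : {x | E x 0} = p) (hE' : {x | E' x 0} = p)
    (h : ∀ x y, x ∉ p → y ∉ p → (E x y ↔ E' x y)) : E = E' := by
  ext a b
  by_cases ha : a ∈ p
  · rw [Con.rel_iff_of_mem hE ha, Con.rel_iff_of_mem hE' ha]
  by_cases hb : b ∈ p
  · rw [(⟨E.symm, E.symm⟩ : E a b ↔ E b a), (⟨E'.symm, E'.symm⟩ : E' a b ↔ E' b a),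
      Con.rel_iff_of_mem hE hb, Con.rel_iff_of_mem hE' hb]
  exact h a b ha hb

theorem IsPrimeCon.rel_of_mul_rel_mul (hE : IsPrimeCon E) (hzero : ∀ x, E x 0 → x ∈ p)
    {a b c : A} (hc : c ∉ p) (h : E (a * c) (b * c)) : E a b :=
  (hE.2 a b c h).resolve_right fun hc0 => hc (hzero c hc0)

variable {h1 : (1 : A) ∉ p} {hmul : ∀ x y : A, x ∉ p → y ∉ p → x * y ∉ p}

theorem IsPrimeCon.rel_of_fracMk_eq (hE : IsPrimeCon E) (hzero : ∀ x, E x 0 → x ∈ p)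
    {x y x' y' : A} (hx : x ∉ p) (hy : y ∉ p) (hx' : x' ∉ p) (hy' : y' ∉ p)
    (heq : fracMk p h1 hmul hx hy = fracMk p h1 hmul hx' hy') (h : E x' y') : E x y := by
  obtain ⟨c, hc, hceq⟩ := (fracMk_eq_fracMk_iff hx hy hx' hy').1 heq
  refine hE.rel_of_mul_rel_mul hzero (hmul c y' hc hy') ?_
  have hl : x' * (c * y) = x * (c * y') := by rw [mul_left_comm, hceq, mul_left_comm]
  have hr : y' * (c * y) = y * (c * y') := by rw [mul_left_comm, mul_comm y' y, mul_left_comm]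
  rw [← hl, ← hr]
  exact E.mul h (E.refl _)

variable (h1 hmul) in
def Con.fracSubmonoid (E : Con A) : Submonoid (fracGroup p h1 hmul) where
  carrier := {g | ∃ (x y : A) (hx : x ∉ p) (hy : y ∉ p), E x y ∧ fracMk p h1 hmul hx hy = g}
  one_mem' := ⟨1, 1, h1, h1, E.refl 1, fracMk_self h1⟩
  mul_mem' := by
    rintro _ _ ⟨x, y, hx, hy, hxy, rfl⟩ ⟨x', y', hx', hy', hxy', rfl⟩
    exact ⟨_, _, _, _, E.mul hxy hxy', (fracMk_mul_fracMk hx hy hx' hy').symm⟩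

theorem IsPrimeCon.fracMk_mem_fracSubmonoid_iff (hE : IsPrimeCon E)
    (hzero : ∀ x, E x 0 → x ∈ p) {x y : A} (hx : x ∉ p) (hy : y ∉ p) :
    fracMk p h1 hmul hx hy ∈ E.fracSubmonoid h1 hmul ↔ E x y := by
  constructor
  · rintro ⟨x', y', hx', hy', h, heq⟩
    exact hE.rel_of_fracMk_eq hzero hx hy hx' hy' heq.symm h
  · exact fun h => ⟨x, y, hx, hy, h, rfl⟩

theorem Con.isSubgroupLike_fracSubmonoid : IsSubgroupLike (E.fracSubmonoid h1 hmul) := by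
  rintro _ ⟨x, y, hx, hy, hxy, rfl⟩ g' hg'
  have hinv : g' = fracMk p h1 hmul hy hx :=
    left_inv_eq_right_inv (by rwa [mul_comm]) (fracMk_mul_fracMk_swap hx hy)
  exact hinv ▸ ⟨y, x, hy, hx, E.symm hxy, rfl⟩

end PrimeCon

section SubgroupCon

variable {A : Type*} [CommMonoidWithZero A] {p : Set A}
  {h1 : (1 : A) ∉ p} {hmul : ∀ x y : A, x ∉ p → y ∉ p → x * y ∉ p}
  {H : Submonoid (fracGroup p h1 hmul)}

def subgroupCon (habs : ∀ a ∈ p, ∀ x : A, a * x ∈ p) (hH : IsSubgroupLike H) : Con A where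
  r a b := (a ∈ p ∧ b ∈ p) ∨ ∃ (ha : a ∉ p) (hb : b ∉ p), fracMk p h1 hmul ha hb ∈ H
  iseqv := by
    refine ⟨fun a => ?_, ?_, ?_⟩
    · by_cases ha : a ∈ p
      · exact .inl ⟨ha, ha⟩
      · exact .inr ⟨ha, ha, fracMk_self ha ▸ H.one_mem⟩
    · rintro a b (⟨ha, hb⟩ | ⟨ha, hb, hab⟩)
      · exact .inl ⟨hb, ha⟩
      · exact .inr ⟨hb, ha, hH _ hab _ (fracMk_mul_fracMk_swap ha hb)⟩
    · rintro a b c (⟨ha, hb⟩ | ⟨ha, hb, hab⟩) (⟨hb', hc⟩ | ⟨hb', hc, hbc⟩)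
      · exact .inl ⟨ha, hc⟩
      · exact absurd hb hb'
      · exact absurd hb' hb
      · exact .inr ⟨ha, hc, fracMk_mul_fracMk_cancel ha hb hc ▸ H.mul_mem hab hbc⟩
  mul' := by
    rintro a b c d (⟨ha, hb⟩ | ⟨ha, hb, hab⟩) (⟨hc, hd⟩ | ⟨hc, hd, hcd⟩)
    · exact .inl ⟨habs _ ha _, habs _ hb _⟩
    · exact .inl ⟨habs _ ha _, habs _ hb _⟩
    · exact .inl ⟨mul_comm c a ▸ habs _ hc _, mul_comm d b ▸ habs _ hd _⟩
    · exact .inr ⟨hmul _ _ ha hc, hmul _ _ hb hd,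
        fracMk_mul_fracMk ha hb hc hd ▸ H.mul_mem hab hcd⟩

variable {habs : ∀ a ∈ p, ∀ x : A, a * x ∈ p} {hH : IsSubgroupLike H}

theorem subgroupCon_iff {a b : A} :
    subgroupCon habs hH a b ↔
      (a ∈ p ∧ b ∈ p) ∨ ∃ (ha : a ∉ p) (hb : b ∉ p), fracMk p h1 hmul ha hb ∈ H :=
  Iff.rfl

theorem subgroupCon_iff_fracMk_mem {x y : A} (hx : x ∉ p) (hy : y ∉ p) :
    subgroupCon habs hH x y ↔ fracMk p h1 hmul hx hy ∈ H := by
  refine ⟨fun h => ?_, fun h => .inr ⟨hx, hy, h⟩⟩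
  rcases h with ⟨hx', -⟩ | ⟨_, _, hmem⟩
  exacts [absurd hx' hx, hmem]

theorem subgroupCon_zero_iff (h0 : (0 : A) ∈ p) {a : A} :
    subgroupCon habs hH a 0 ↔ a ∈ p := by
  simp [subgroupCon_iff, h0]

theorem isPrimeCon_subgroupCon (h0 : (0 : A) ∈ p) : IsPrimeCon (subgroupCon habs hH) := by
  refine ⟨fun h => h1 ((subgroupCon_zero_iff h0).1 h), fun a b f hab => ?_⟩
  by_cases hf : f ∈ p
  · exact .inr ((subgroupCon_zero_iff h0).2 hf)
  refine .inl ?_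
  rcases hab with ⟨haf, hbf⟩ | ⟨haf, hbf, hmem⟩
  · exact .inl ⟨not_not.1 fun ha => hmul _ _ ha hf haf, not_not.1 fun hb => hmul _ _ hb hf hbf⟩
  · have ha : a ∉ p := fun ha => haf (habs _ ha _)
    have hb : b ∉ p := fun hb => hbf (habs _ hb _)
    exact (subgroupCon_iff_fracMk_mem ha hb).2 (fracMk_mul_right ha hb haf hbf ▸ hmem)

end SubgroupCon

/-- The prime congruences on `A` with zero class `p` are in natural bijection with the
subgroups `H` of the group of fractions `G` of `A ∖ p`, via:
`x ∼ 0 ↔ x ∈ p`, and for `x, y ∉ p`, `x ∼ y ↔ x⁻¹y ∈ H`. -/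
theorem primeCon_fiber_eq_subgroups {A : Type*} [CommMonoidWithZero A] (p : Set A)
    (h0 : (0 : A) ∈ p) (h1 : (1 : A) ∉ p)
    (habs : ∀ a ∈ p, ∀ x : A, a * x ∈ p)
    (hmul : ∀ x y : A, x ∉ p → y ∉ p → x * y ∉ p) :
    (∀ E : Con A, IsPrimeCon E → {x : A | E x 0} = p →
      ∃! H : Submonoid (fracGroup p h1 hmul), IsSubgroupLike H ∧
        ∀ (x y : A) (hx : x ∉ p) (hy : y ∉ p),
          E x y ↔ fracMk p h1 hmul hx hy ∈ H) ∧
    (∀ H : Submonoid (fracGroup p h1 hmul), IsSubgroupLike H →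
      ∃! E : Con A, IsPrimeCon E ∧ {x : A | E x 0} = p ∧
        ∀ (x y : A) (hx : x ∉ p) (hy : y ∉ p),
          E x y ↔ fracMk p h1 hmul hx hy ∈ H) := by
  constructor
  · intro E hE hzero
    have hmem_of_rel_zero : ∀ x, E x 0 → x ∈ p := fun x hx => hzero ▸ hx
    have hiff : ∀ (x y : A) (hx : x ∉ p) (hy : y ∉ p),
        E x y ↔ fracMk p h1 hmul hx hy ∈ E.fracSubmonoid h1 hmul :=
      fun x y hx hy => (hE.fracMk_mem_fracSubmonoid_iff hmem_of_rel_zero hx hy).symm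
    refine ⟨E.fracSubmonoid h1 hmul, ⟨E.isSubgroupLike_fracSubmonoid, hiff⟩, ?_⟩
    rintro H ⟨-, hH⟩
    exact submonoid_fracGroup_ext fun x y hx hy => (hH x y hx hy).symm.trans (hiff x y hx hy)
  · intro H hH
    have hzero : {x | subgroupCon habs hH x 0} = p := Set.ext fun _ => subgroupCon_zero_iff h0
    refine ⟨subgroupCon habs hH, ⟨isPrimeCon_subgroupCon h0, hzero,
      fun x y => subgroupCon_iff_fracMk_mem⟩, ?_⟩
    rintro E ⟨-, hEzero, hE⟩
    exact Con.eq_of_zero_class_eq hEzero hzero fun x y hx hy =>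
      (hE x y hx hy).trans (subgroupCon_iff_fracMk_mem hx hy).symm
end
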